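/- Soundness of the cross-tag test under distinct xtags: if the map (g, id) ↦ h^{F_p(K_X,g)·F_p(K_I,id)} is injective on the finite set of all (keyword, id) pairs, then gtoken[c,i]^y ∈ 𝓢_G holds if and only if id (the c-th id in the sterm list) belongs to GDB(g_i). -/
import Mathlib

private lemma hpow_mod {G : Type*} [Group G] (p : ℕ) (h : G) (hp : h ^ p = 1)
    (m n : ℕ) (hmn : m % p = n % p) : h ^ m = h ^ n := by
  have e : ∀ k : ℕ, h ^ k = h ^ (k % p) := by
    intro k
    conv_lhs => rw [← Nat.div_add_mod k p]
    rw [pow_add, pow_mul, hp, one_pow, one_mul]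
  rw [e m, e n, hmn]

/-- Soundness of the cross-tag test under distinct xtags: if the xtag map
`(g, id) ↦ h^{Fx g · Fi id}` is injective on pairs, then for the `c`-th
identifier `id_c` of the sterm list (with `z ≠ 0` and `y = Fi id_c · z⁻¹`),
`gtoken^y ∈ 𝓢_G` holds if and only if `id_c ∈ GDB g_i`. -/
theorem cross_tag_test_sound {G ID KW : Type*} [Group G] (p : ℕ) [Fact p.Prime]
    (h : G) (hp : h ^ p = 1)
    (Fx : KW → ZMod p) (Fi : ID → ZMod p) (GDB : KW → Set ID)
    (xtag : KW → ID → G) (hxtag : ∀ g id, xtag g id = h ^ (Fx g * Fi id).val)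
    (hinj : Function.Injective (fun q : KW × ID => xtag q.1 q.2))
    (SG : Set G) (hSG : SG = {x | ∃ g id, id ∈ GDB g ∧ x = xtag g id})
    (gi : KW) (idc : ID) (z y : ZMod p) (hz : z ≠ 0) (hy : y = Fi idc * z⁻¹)
    (gtoken : G) (hgtoken : gtoken = h ^ (z * Fx gi).val) :
    gtoken ^ y.val ∈ SG ↔ idc ∈ GDB gi := by
  have hkey : gtoken ^ y.val = xtag gi idc := by
    rw [hgtoken, hxtag, ← pow_mul]
    apply hpow_mod p h hp
    have : ((z * Fx gi) * y : ZMod p) = Fx gi * Fi idc := by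
      rw [hy]; field_simp
    calc (z * Fx gi).val * y.val % p = ((z * Fx gi) * y : ZMod p).val % p := by
          simp [ZMod.val_mul, Nat.mod_mod]
      _ = (Fx gi * Fi idc).val % p := by rw [this]
  rw [hkey, hSG]
  constructor
  · rintro ⟨g, id, hid, heq⟩
    have : (gi, idc) = (g, id) := hinj heq
    obtain ⟨rfl, rfl⟩ := Prod.mk.injEq .. ▸ this
    exact hid
  · intro hid
    exact ⟨gi, idc, hid, rfl⟩
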